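/- Let g be a metric on an open set Ω ⊆ ℝ^m, let τ be a smooth covector field satisfying ∇_i τ_j = κ g_{ij} + τ_i β_j with Σ_{i,j} g^{ij} β_i τ_j = 0 and β closed (∂_i β_j = ∂_j β_i for all i, j) — i.e. τ is a doubly torqued vector with α = 0, the case characterizing doubly warped spacetimes. Let θ : Ω → ℝ be smooth with Σ_{i,j} g^{ij} τ_i ∂_j θ = 0, let ĝ = e^{2θ} g with covariant derivative ∇̂, and let τ̂_i = e^{θ} τ_i. Then ∇̂_i τ̂_j = (e^{−θ} κ) ĝ_{ij} + τ̂_i (β_j − ∂_j θ), the covector β̂ := β − dθ is closed, and Σ_{i,j} ĝ^{ij} β̂_i τ̂_j = 0; that is, τ̂ is again a doubly torqued vector with vanishing α for ĝ. -/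

import Mathlib

open scoped BigOperators

/-- Partial derivative of `f : ℝ^m → ℝ` in the `i`-th coordinate direction. -/
noncomputable def pd {m : ℕ} (i : Fin m) (f : (Fin m → ℝ) → ℝ) (x : Fin m → ℝ) : ℝ :=
  fderiv ℝ f x (Pi.single i 1)

/-- Christoffel symbols `Γ^k_{ij}` of a matrix-valued field `g`. -/
noncomputable def Christoffel {m : ℕ} (g : (Fin m → ℝ) → Matrix (Fin m) (Fin m) ℝ)
    (k i j : Fin m) (x : Fin m → ℝ) : ℝ :=
  (1 / 2) * ∑ l, (g x)⁻¹ k l *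
    (pd i (fun y => g y l j) x + pd j (fun y => g y l i) x - pd l (fun y => g y i j) x)

/-- Covariant derivative `∇_i τ_j` of a covector field `τ`. -/
noncomputable def covDeriv {m : ℕ} (g : (Fin m → ℝ) → Matrix (Fin m) (Fin m) ℝ)
    (τ : (Fin m → ℝ) → Fin m → ℝ) (i j : Fin m) (x : Fin m → ℝ) : ℝ :=
  pd i (fun y => τ y j) x - ∑ k, Christoffel g k i j x * τ x k

/-- `g` is a metric on `Ω`: smooth, symmetric and invertible there. -/
def IsMetricOn {m : ℕ} (g : (Fin m → ℝ) → Matrix (Fin m) (Fin m) ℝ)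
    (Ω : Set (Fin m → ℝ)) : Prop :=
  (∀ i j, ContDiffOn ℝ (⊤ : ℕ∞) (fun x => g x i j) Ω) ∧
  (∀ x ∈ Ω, (g x).IsSymm) ∧ (∀ x ∈ Ω, IsUnit (g x).det)

lemma pd_mul {m : ℕ} {f h : (Fin m → ℝ) → ℝ} {x : Fin m → ℝ}
    (hf : DifferentiableAt ℝ f x) (hh : DifferentiableAt ℝ h x) (i : Fin m) :
    pd i (fun y => f y * h y) x = pd i f x * h x + f x * pd i h x := by
  unfold pd
  rw [fderiv_fun_mul hf hh]
  simp only [ContinuousLinearMap.add_apply, ContinuousLinearMap.smul_apply, smul_eq_mul]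
  ring

lemma pd_sub {m : ℕ} {f h : (Fin m → ℝ) → ℝ} {x : Fin m → ℝ}
    (hf : DifferentiableAt ℝ f x) (hh : DifferentiableAt ℝ h x) (i : Fin m) :
    pd i (fun y => f y - h y) x = pd i f x - pd i h x := by
  unfold pd
  rw [fderiv_fun_sub hf hh]
  simp

lemma pd_exp {m : ℕ} {f : (Fin m → ℝ) → ℝ} {x : Fin m → ℝ}
    (hf : DifferentiableAt ℝ f x) (i : Fin m) :
    pd i (fun y => Real.exp (f y)) x = Real.exp (f x) * pd i f x := by
  unfold pd
  rw [fderiv_exp hf]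
  simp

lemma pd_const_mul {m : ℕ} {f : (Fin m → ℝ) → ℝ} {x : Fin m → ℝ}
    (hf : DifferentiableAt ℝ f x) (c : ℝ) (i : Fin m) :
    pd i (fun y => c * f y) x = c * pd i f x := by
  unfold pd
  rw [fderiv_const_mul hf]
  simp

lemma pd_fderiv_apply {m : ℕ} {f : (Fin m → ℝ) → ℝ} {x : Fin m → ℝ}
    (hf : ContDiffAt ℝ 2 f x) (i j : Fin m) :
    pd i (fun y => pd j f y) x = fderiv ℝ (fderiv ℝ f) x (Pi.single i 1) (Pi.single j 1) := by
  have hd : DifferentiableAt ℝ (fderiv ℝ f) x :=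
    (hf.fderiv_right (m := 1) (by norm_num)).differentiableAt one_ne_zero
  unfold pd
  have : (fun y => fderiv ℝ f y (Pi.single j 1)) =
      (fun L : (Fin m → ℝ) →L[ℝ] ℝ => L (Pi.single j 1)) ∘ fderiv ℝ f := rfl
  rw [this]
  rw [show (fun L : (Fin m → ℝ) →L[ℝ] ℝ => L (Pi.single j 1)) =
    (ContinuousLinearMap.apply ℝ ℝ (Pi.single j (1:ℝ))) from rfl]
  rw [fderiv_comp x (ContinuousLinearMap.apply ℝ ℝ (Pi.single j (1:ℝ))).differentiableAt hd]
  simp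

lemma pd_symm {m : ℕ} {f : (Fin m → ℝ) → ℝ} {x : Fin m → ℝ}
    (hf : ContDiffAt ℝ 2 f x) (i j : Fin m) :
    pd i (fun y => pd j f y) x = pd j (fun y => pd i f y) x := by
  rw [pd_fderiv_apply hf, pd_fderiv_apply hf]
  exact hf.isSymmSndFDerivAt (by norm_num) _ _

lemma pd_diffAt {m : ℕ} {f : (Fin m → ℝ) → ℝ} {x : Fin m → ℝ}
    (hf : ContDiffAt ℝ 2 f x) (j : Fin m) :
    DifferentiableAt ℝ (fun y => pd j f y) x := by
  have h1 : ContDiffAt ℝ 1 (fderiv ℝ f) x := hf.fderiv_right (m := 1) (by norm_num)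
  exact (((ContinuousLinearMap.apply ℝ ℝ (Pi.single j (1:ℝ))).contDiff.contDiffAt).comp x
    h1).differentiableAt one_ne_zero

/-- a conformal map with `τ ⟂ dθ` sends a doubly torqued vector with
`α = 0` and `β` closed (doubly warped case) to one of the same kind. -/
theorem conformal_doubly_warped
    {m : ℕ} (Ω : Set (Fin m → ℝ)) (hΩ : IsOpen Ω)
    (g : (Fin m → ℝ) → Matrix (Fin m) (Fin m) ℝ) (hg : IsMetricOn g Ω)
    (τ : (Fin m → ℝ) → Fin m → ℝ) (hτ : ∀ j, ContDiffOn ℝ (⊤ : ℕ∞) (fun x => τ x j) Ω)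
    (κ : (Fin m → ℝ) → ℝ) (hκ : ContDiffOn ℝ (⊤ : ℕ∞) κ Ω)
    (β : (Fin m → ℝ) → Fin m → ℝ)
    (hβ : ∀ j, ContDiffOn ℝ (⊤ : ℕ∞) (fun x => β x j) Ω)
    (heq : ∀ x ∈ Ω, ∀ i j : Fin m,
      covDeriv g τ i j x = κ x * g x i j + τ x i * β x j)
    (hβτ : ∀ x ∈ Ω, ∑ i, ∑ j, (g x)⁻¹ i j * β x i * τ x j = 0)
    (hβclosed : ∀ x ∈ Ω, ∀ i j : Fin m,
      pd i (fun y => β y j) x = pd j (fun y => β y i) x)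
    (θ : (Fin m → ℝ) → ℝ) (hθ : ContDiffOn ℝ (⊤ : ℕ∞) θ Ω)
    (ghat : (Fin m → ℝ) → Matrix (Fin m) (Fin m) ℝ)
    (hghat : ∀ x, ghat x = Matrix.of fun i j => Real.exp (2 * θ x) * g x i j)
    (hτθ : ∀ x ∈ Ω, ∑ i, ∑ j, (g x)⁻¹ i j * τ x i * pd j θ x = 0)
    (τh : (Fin m → ℝ) → Fin m → ℝ)
    (hτh : ∀ x i, τh x i = Real.exp (θ x) * τ x i)
    (βh : (Fin m → ℝ) → Fin m → ℝ)
    (hβh : ∀ x j, βh x j = β x j - pd j θ x) :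
    ∀ x ∈ Ω,
      (∀ i j : Fin m,
        covDeriv ghat τh i j x =
          (Real.exp (-(θ x)) * κ x) * ghat x i j + τh x i * βh x j) ∧
      (∀ i j : Fin m,
        pd i (fun y => βh y j) x = pd j (fun y => βh y i) x) ∧
      (∑ i, ∑ j, (ghat x)⁻¹ i j * βh x i * τh x j = 0) := by
  obtain ⟨hgsm, hgsymm, hgdet⟩ := hg
  intro x hx
  have hmem := hΩ.mem_nhds hx
  have dΘ : ContDiffAt ℝ 2 θ x := (hθ.contDiffAt hmem).of_le (WithTop.coe_le_coe.mpr le_top)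
  have dθ : DifferentiableAt ℝ θ x := dΘ.differentiableAt two_ne_zero
  have dτ : ∀ j, DifferentiableAt ℝ (fun y => τ y j) x :=
    fun j => ((hτ j).contDiffAt hmem).differentiableAt (by simp)
  have dg : ∀ a b, DifferentiableAt ℝ (fun y => g y a b) x :=
    fun a b => ((hgsm a b).contDiffAt hmem).differentiableAt (by simp)
  have dβ : ∀ j, DifferentiableAt ℝ (fun y => β y j) x :=
    fun j => ((hβ j).contDiffAt hmem).differentiableAt (by simp)
  have d2θ : DifferentiableAt ℝ (fun y => 2 * θ y) x := dθ.const_mul 2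
  have dpdθ : ∀ j, DifferentiableAt ℝ (fun y => pd j θ y) x := pd_diffAt dΘ
  -- inverse of ghat
  have hginv : ∀ k l, (ghat x)⁻¹ k l = Real.exp (-(2*θ x)) * (g x)⁻¹ k l := by
    have hsm : ghat x = Real.exp (2*θ x) • g x := by
      rw [hghat x]; ext a b; simp [Matrix.smul_apply]
    have hkey : (ghat x)⁻¹ = Real.exp (-(2*θ x)) • (g x)⁻¹ := by
      apply Matrix.inv_eq_right_inv
      rw [hsm, Matrix.smul_mul, Matrix.mul_smul, smul_smul,
        Matrix.mul_nonsing_inv _ (hgdet x hx), ← Real.exp_add]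
      norm_num
    intro k l
    rw [hkey, Matrix.smul_apply, smul_eq_mul]
  -- symmetry of g⁻¹
  have hgsymminv : ∀ a b, (g x)⁻¹ a b = (g x)⁻¹ b a := by
    intro a b
    have ht : Matrix.transpose (g x)⁻¹ = (g x)⁻¹ := by
      rw [Matrix.transpose_nonsing_inv, (hgsymm x hx).eq]
    conv_lhs => rw [← ht]
    exact Matrix.transpose_apply _ a b
  -- Kronecker delta
  have hdelta : ∀ k j, (∑ l, (g x)⁻¹ k l * g x l j) = if k = j then (1:ℝ) else 0 := by
    intro k j
    have h := Matrix.nonsing_inv_mul (g x) (hgdet x hx)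
    have h2 := congrFun (congrFun h k) j
    rw [Matrix.mul_apply] at h2
    rw [h2, Matrix.one_apply]
  -- derivatives of ghat entries
  have hpdghat : ∀ (i a b : Fin m), pd i (fun y => ghat y a b) x
      = Real.exp (2*θ x) * (2 * pd i θ x) * g x a b
        + Real.exp (2*θ x) * pd i (fun y => g y a b) x := by
    intro i a b
    have hf : (fun y => ghat y a b) = fun y => Real.exp (2*θ y) * g y a b := by
      funext y; rw [hghat y]; rfl
    rw [hf, pd_mul d2θ.exp (dg a b) i, pd_exp d2θ i, pd_const_mul dθ 2 i]
  -- derivative of τh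
  have hpdτh : ∀ (i j : Fin m), pd i (fun y => τh y j) x
      = Real.exp (θ x) * pd i θ x * τ x j + Real.exp (θ x) * pd i (fun y => τ y j) x := by
    intro i j
    have hf : (fun y => τh y j) = fun y => Real.exp (θ y) * τ y j := funext fun y => hτh y j
    rw [hf, pd_mul dθ.exp (dτ j) i, pd_exp dθ i]
  -- the orthogonality sum
  have hz : (∑ k, (∑ l, (g x)⁻¹ k l * pd l θ x) * τ x k) = 0 := by
    calc ∑ k, (∑ l, (g x)⁻¹ k l * pd l θ x) * τ x k
        = ∑ k, ∑ l, (g x)⁻¹ k l * τ x k * pd l θ x := by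
          refine Finset.sum_congr rfl fun k _ => ?_
          rw [Finset.sum_mul]
          exact Finset.sum_congr rfl fun l _ => by ring
      _ = 0 := hτθ x hx
  refine ⟨?_, ?_, ?_⟩
  · -- Part 1
    intro i j
    have hChr : ∀ k : Fin m, Christoffel ghat k i j x =
        Christoffel g k i j x + pd i θ x * (if k = j then 1 else 0)
          + pd j θ x * (if k = i then 1 else 0)
          - (∑ l, (g x)⁻¹ k l * pd l θ x) * g x i j := by
      intro k
      unfold Christoffel
      have step : ∀ l, (ghat x)⁻¹ k l *
          (pd i (fun y => ghat y l j) x + pd j (fun y => ghat y l i) x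
            - pd l (fun y => ghat y i j) x)
        = (g x)⁻¹ k l * (pd i (fun y => g y l j) x + pd j (fun y => g y l i) x
            - pd l (fun y => g y i j) x)
          + 2 * ((g x)⁻¹ k l *
            (pd i θ x * g x l j + pd j θ x * g x l i - pd l θ x * g x i j)) := by
        intro l
        rw [hginv k l, hpdghat i l j, hpdghat j l i, hpdghat l i j, Real.exp_neg]
        field_simp
        ring
      simp only [step]
      rw [Finset.sum_add_distrib, mul_add]
      have hsplit : (1:ℝ)/2 * ∑ l, 2 * ((g x)⁻¹ k l *
            (pd i θ x * g x l j + pd j θ x * g x l i - pd l θ x * g x i j))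
          = pd i θ x * (∑ l, (g x)⁻¹ k l * g x l j)
            + pd j θ x * (∑ l, (g x)⁻¹ k l * g x l i)
            - (∑ l, (g x)⁻¹ k l * pd l θ x) * g x i j := by
        rw [Finset.mul_sum, Finset.mul_sum, Finset.mul_sum, Finset.sum_mul,
          ← Finset.sum_add_distrib, ← Finset.sum_sub_distrib]
        exact Finset.sum_congr rfl fun l _ => by ring
      rw [hsplit, hdelta k j, hdelta k i]
      ring
    have hsum : ∑ k, Christoffel ghat k i j x * τh x k
        = Real.exp (θ x) * ((∑ k, Christoffel g k i j x * τ x k)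
            + pd i θ x * τ x j + pd j θ x * τ x i
            - (∑ k, (∑ l, (g x)⁻¹ k l * pd l θ x) * τ x k) * g x i j) := by
      calc ∑ k, Christoffel ghat k i j x * τh x k
          = ∑ k, (Real.exp (θ x) * (Christoffel g k i j x * τ x k)
              + Real.exp (θ x) * pd i θ x * (if k = j then τ x k else 0)
              + Real.exp (θ x) * pd j θ x * (if k = i then τ x k else 0)
              - Real.exp (θ x) * ((∑ l, (g x)⁻¹ k l * pd l θ x) * τ x k * g x i j)) := by
            refine Finset.sum_congr rfl fun k _ => ?_
            rw [hChr k, hτh x k]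
            split_ifs <;> ring
        _ = _ := by
            rw [Finset.sum_sub_distrib, Finset.sum_add_distrib, Finset.sum_add_distrib,
              ← Finset.mul_sum, ← Finset.mul_sum, ← Finset.mul_sum, ← Finset.mul_sum]
            simp only [Finset.sum_ite_eq', Finset.mem_univ, if_true, Finset.sum_mul]
            ring
    have hPS := heq x hx i j
    unfold covDeriv at hPS ⊢
    rw [hpdτh i j, hsum, hz, hτh x i, hβh x j, hghat x]
    simp only [Matrix.of_apply]
    have hee : Real.exp (-(θ x)) * Real.exp (2*θ x) = Real.exp (θ x) := by
      rw [← Real.exp_add]; ring_nf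
    linear_combination Real.exp (θ x) * hPS - κ x * g x i j * hee
  · -- Part 2: closedness of βh
    intro i j
    have hfun : ∀ j : Fin m, (fun y => βh y j) = fun y => β y j - pd j θ y :=
      fun j => funext fun y => hβh y j
    rw [hfun j, hfun i, pd_sub (dβ j) (dpdθ j) i, pd_sub (dβ i) (dpdθ i) j,
      hβclosed x hx i j, pd_symm dΘ i j]
  · -- Part 3
    have h2' : (∑ i, ∑ j, (g x)⁻¹ i j * pd i θ x * τ x j) = 0 := by
      calc ∑ i, ∑ j, (g x)⁻¹ i j * pd i θ x * τ x j
          = ∑ j, ∑ i, (g x)⁻¹ j i * τ x j * pd i θ x := by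
            rw [Finset.sum_comm]
            exact Finset.sum_congr rfl fun a _ => Finset.sum_congr rfl fun b _ => by
              rw [hgsymminv b a]; ring
        _ = 0 := hτθ x hx
    calc ∑ i, ∑ j, (ghat x)⁻¹ i j * βh x i * τh x j
        = ∑ i, ∑ j, (Real.exp (-(2*θ x)) * Real.exp (θ x)) *
            ((g x)⁻¹ i j * β x i * τ x j - (g x)⁻¹ i j * pd i θ x * τ x j) := by
          refine Finset.sum_congr rfl fun a _ => Finset.sum_congr rfl fun b _ => ?_
          rw [hginv a b, hβh x a, hτh x b]; ring
      _ = 0 := by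
          simp only [← Finset.mul_sum, Finset.sum_sub_distrib]
          rw [hβτ x hx, h2']
          simp
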